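/- In the braid group Br_{n+1}, the standard lift of the longest element ℓ_{i,j} is fixed by the reversal anti-automorphism: reading the word (s_i)(s_{i+1}s_i)···(s_j···s_i) backwards yields an equal element of Br_{n+1}. -/

import Mathlib

namespace BraidPaper

/-- The braid relations on `n` generators `s_1, ..., s_n` (indexed by `Fin n`):
far-away commutativity and the braid relation for adjacent generators.  The
corresponding presented group is the Artin braid group `Br_{n+1}`. -/
def braidRelsSet (n : ℕ) : Set (FreeGroup (Fin n)) :=
  {r | (∃ i j : Fin n, (i : ℕ) + 2 ≤ (j : ℕ) ∧
        r = FreeGroup.of i * FreeGroup.of j * (FreeGroup.of i)⁻¹ * (FreeGroup.of j)⁻¹) ∨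
       (∃ i j : Fin n, (i : ℕ) + 1 = (j : ℕ) ∧
        r = FreeGroup.of i * FreeGroup.of j * FreeGroup.of i *
            (FreeGroup.of j)⁻¹ * (FreeGroup.of i)⁻¹ * (FreeGroup.of j)⁻¹)}

/-- The Artin braid group `Br_{n+1}` on generators `s_1, ..., s_n`. -/
abbrev BraidGroup (n : ℕ) := PresentedGroup (braidRelsSet n)

/-- The generator `s_i` of `Br_{n+1}`, for `1 ≤ i ≤ n` (junk value `1` otherwise). -/
def gen (n : ℕ) (i : ℕ) : BraidGroup n :=
  if h : 1 ≤ i ∧ i ≤ n then PresentedGroup.of (⟨i - 1, by omega⟩ : Fin n) else 1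

/-- The descending product `s_j s_{j-1} ⋯ s_i` (equal to `1` if `j < i`). -/
def desc (n j i : ℕ) : BraidGroup n :=
  (((List.range' i (j + 1 - i)).reverse).map (gen n)).prod

/-- The ascending product `s_i s_{i+1} ⋯ s_j` (equal to `1` if `j < i`). -/
def asc (n i j : ℕ) : BraidGroup n :=
  ((List.range' i (j + 1 - i)).map (gen n)).prod

/-- The standard lift `ℓ_{i,j} = (s_i)(s_{i+1}s_i)⋯(s_j⋯s_i)` of the longest element
over the interval `[i,j]`, with the convention `ℓ_{i,j} = 1` when `j < i`. -/
def ell (n i j : ℕ) : BraidGroup n :=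
  ((List.range' i (j + 1 - i)).map (fun k => desc n k i)).prod

/-- Far generators commute. -/
lemma gen_comm (n a b : ℕ) (h : a + 2 ≤ b) : Commute (gen n a) (gen n b) := by
  unfold gen
  by_cases ha : 1 ≤ a ∧ a ≤ n
  · by_cases hb : 1 ≤ b ∧ b ≤ n
    · rw [dif_pos ha, dif_pos hb]
      rw [← commutatorElement_eq_one_iff_commute]
      have hrel : (FreeGroup.of (⟨a-1, by omega⟩ : Fin n) *
          FreeGroup.of (⟨b-1, by omega⟩ : Fin n) *
          (FreeGroup.of (⟨a-1, by omega⟩ : Fin n))⁻¹ *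
          (FreeGroup.of (⟨b-1, by omega⟩ : Fin n))⁻¹) ∈ braidRelsSet n := by
        left
        exact ⟨⟨a-1, by omega⟩, ⟨b-1, by omega⟩, by simp; omega, rfl⟩
      have h1 : (QuotientGroup.mk (FreeGroup.of (⟨a-1, by omega⟩ : Fin n) *
          FreeGroup.of (⟨b-1, by omega⟩ : Fin n) *
          (FreeGroup.of (⟨a-1, by omega⟩ : Fin n))⁻¹ *
          (FreeGroup.of (⟨b-1, by omega⟩ : Fin n))⁻¹) : BraidGroup n) = 1 := by
        rw [QuotientGroup.eq_one_iff]
        exact Subgroup.subset_normalClosure hrel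
      simpa [commutatorElement_def, PresentedGroup.of, mul_assoc] using
        (show PresentedGroup.mk (braidRelsSet n) (_ : FreeGroup (Fin n)) = 1 from h1)
    · rw [dif_neg hb]; exact Commute.one_right _
  · rw [dif_neg ha]; exact Commute.one_left _

lemma range'_concat' {i j : ℕ} (h : i ≤ j + 1) :
    List.range' i (j + 2 - i) = List.range' i (j + 1 - i) ++ [j + 1] := by
  have h1 : j + 2 - i = (j + 1 - i) + 1 := by omega
  rw [h1, List.range'_concat]
  congr 2
  omega

lemma range'_singleton (i : ℕ) : List.range' i (i + 1 - i) = [i] := by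
  have : i + 1 - i = 1 := by omega
  rw [this, List.range'_one]

lemma desc_self (n i : ℕ) : desc n i i = gen n i := by
  simp [desc, range'_singleton]

lemma asc_self (n i : ℕ) : asc n i i = gen n i := by
  simp [asc, range'_singleton]

lemma ell_self (n i : ℕ) : ell n i i = desc n i i := by
  simp [ell, range'_singleton]

lemma desc_succ (n j i : ℕ) (h : i ≤ j + 1) :
    desc n (j + 1) i = gen n (j + 1) * desc n j i := by
  simp [desc, range'_concat' h]

lemma asc_succ (n i j : ℕ) (h : i ≤ j + 1) :
    asc n i (j + 1) = asc n i j * gen n (j + 1) := by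
  simp [asc, range'_concat' h]

lemma ell_succ (n i j : ℕ) (h : i ≤ j + 1) :
    ell n i (j + 1) = ell n i j * desc n (j + 1) i := by
  simp [ell, range'_concat' h]

/-- A far generator commutes with `desc`. -/
lemma gen_comm_desc (n m j i : ℕ) (h : j + 2 ≤ m) : Commute (gen n m) (desc n j i) := by
  apply Commute.list_prod_right
  intro x hx
  simp only [List.mem_map, List.mem_reverse, List.mem_range'] at hx
  obtain ⟨k, hk, rfl⟩ := hx
  exact (gen_comm n k m (by omega)).symm

/-- A far generator commutes with `ell`. -/
lemma gen_comm_ell (n m i j : ℕ) (h : j + 2 ≤ m) : Commute (gen n m) (ell n i j) := by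
  apply Commute.list_prod_right
  intro x hx
  simp only [List.mem_map, List.mem_range'] at hx
  obtain ⟨k, hk, rfl⟩ := hx
  exact gen_comm_desc n m k i (by omega)

/-- The key pushing lemma. -/
lemma ell_mul_desc (n i k : ℕ) (hik0 : i ≤ k) :
    ell n i k * desc n (k + 1) i = asc n i (k + 1) * ell n i k := by
  induction k, hik0 using Nat.le_induction with
  | base =>
      rw [ell_self, desc_self, asc_succ n i i (by omega), asc_self,
        desc_succ n i i (by omega), desc_self, mul_assoc]
  | succ k hk ih =>
      have hik : i ≤ k := hk
      rw [ell_succ n i k (by omega), desc_succ n (k + 1) i (by omega),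
        asc_succ n i (k + 1) (by omega)]
      have hcomm : gen n (k + 2) * ell n i k = ell n i k * gen n (k + 2) :=
        gen_comm_ell n (k + 2) i k (by omega)
      calc ell n i k * desc n (k + 1) i * (gen n (k + 2) * desc n (k + 1) i)
          = ell n i k * desc n (k + 1) i * gen n (k + 2) * desc n (k + 1) i := by
            rw [mul_assoc, mul_assoc, mul_assoc]
        _ = asc n i (k + 1) * ell n i k * gen n (k + 2) * desc n (k + 1) i := by
            rw [ih]
        _ = asc n i (k + 1) * (ell n i k * gen n (k + 2)) * desc n (k + 1) i := by
            rw [mul_assoc (asc n i (k + 1))]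
        _ = asc n i (k + 1) * (gen n (k + 2) * ell n i k) * desc n (k + 1) i := by
            rw [hcomm]
        _ = asc n i (k + 1) * gen n (k + 2) * (ell n i k * desc n (k + 1) i) := by
            group

/-- Reading the word `(s_i)(s_{i+1}s_i)⋯(s_j⋯s_i)` defining `ℓ_{i,j}` backwards, namely
`(s_i⋯s_j)⋯(s_i s_{i+1})(s_i)`, yields an equal element of `Br_{n+1}`:
`ℓ_{i,j}` is fixed by the reversal anti-automorphism. -/
theorem ell_palindromic (n i j : ℕ) (hi : 1 ≤ i) (hij : i ≤ j) (hj : j ≤ n) :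
    (((List.range' i (j + 1 - i)).reverse).map (fun k => asc n i k)).prod = ell n i j := by
  clear hi hj
  induction j, hij using Nat.le_induction with
  | base => simp [range'_singleton, ell_self, asc_self, desc_self]
  | succ j hj ih =>
      rw [range'_concat' (by omega), List.reverse_append, List.reverse_singleton]
      simp only [List.map_append, List.map_cons, List.map_nil, List.singleton_append,
        List.prod_cons]
      rw [ih, ← ell_mul_desc n i j hj, ← ell_succ n i j (by omega)]
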